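/- arXiv:2107.02570 — 2 statements merged into one kernel-verified Lean document; each statement's English description precedes it below -/
import Mathlib

section
/- There exists a constant C > 0 such that for every integer l ≥ 1 the following holds: let H_l = {f₁ ∩ ⋯ ∩ f_l : f₁, …, f_l ∈ H_≤ ∪ H_≥} be the family of intersections of l classifiers. Then every finite set of closed disks that is shattered by H_l has cardinality at most C · l · log(l + 1); i.e., the range space (𝒟, H_l) has VC dimension O(l log l). -/
noncomputable section

/-- The ground set `𝒟` of closed disks in the plane: pairs `(center, radius)`
with radius `≥ 0`. -/
def Ddisks : Set (EuclideanSpace ℝ (Fin 2) × ℝ) := {d | 0 ≤ d.2}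

/-- `𝒟(h_≥)` for the circle `h = (q, s)`. -/
def Dge (q : EuclideanSpace ℝ (Fin 2)) (s : ℝ) : Set (EuclideanSpace ℝ (Fin 2) × ℝ) :=
  {d | d ∈ Ddisks ∧ s ≤ dist d.1 q + d.2}

/-- `𝒟(h_≤)` for the circle `h = (q, s)`. -/
def Dle (q : EuclideanSpace ℝ (Fin 2)) (s : ℝ) : Set (EuclideanSpace ℝ (Fin 2) × ℝ) :=
  {d | d ∈ Ddisks ∧ dist d.1 q - d.2 ≤ s}

/-- The family `H_≥ = {𝒟(h_≥) : h a circle}`. -/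
def Hge : Set (Set (EuclideanSpace ℝ (Fin 2) × ℝ)) :=
  {f | ∃ q s, 0 < s ∧ f = Dge q s}

/-- The family `H_≤ = {𝒟(h_≤) : h a circle}`. -/
def Hle : Set (Set (EuclideanSpace ℝ (Fin 2) × ℝ)) :=
  {f | ∃ q s, 0 < s ∧ f = Dle q s}

/-- `H_l`: intersections of `l` classifiers from a family `F`. -/
def InterFamily {X : Type*} (F : Set (Set X)) (l : ℕ) : Set (Set X) :=
  {f | ∃ g : Fin l → Set X, (∀ i, g i ∈ F) ∧ f = ⋂ i, g i}

/-- A family `F` of subsets of a ground set shatters `Y` if every subset of `Y` is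
cut out by some member of `F`. -/
def Shatters {X : Type*} (F : Set (Set X)) (Y : Set X) : Prop :=
  ∀ S ⊆ Y, ∃ f ∈ F, f ∩ Y = S


/-!
Lifting a disk `(p, r)` to `(‖p‖² - r², p, r) ∈ ℝ × ℝ² × ℝ` turns each `𝒟(h_≤)` into the
trace of a halfspace and each `𝒟(h_≥)` into the trace of a union of two halfspaces. By Radon's
theorem halfspaces of this 4-dimensional space shatter at most 5 points, so by Sauer–Shelah
they cut out at most `(m + 1)⁵` subsets of a set of `m` disks, and intersections of `l` members
of `H_≤ ∪ H_≥` cut out at most `(m + 1)^(10 l)`. A shattered set has all `2^m` subsets cut out,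
and `2^m ≤ (m + 1)^(10 l)` forces `m = O(l log l)`.
-/

open Finset Module

section Radon

variable {𝕜 E : Type*} [Field 𝕜] [LinearOrder 𝕜] [IsStrictOrderedRing 𝕜]
  [AddCommGroup E] [Module 𝕜 E] [FiniteDimensional 𝕜 E]

theorem card_le_finrank_add_one_of_shatters {F : Set (Set E)}
    (hF : ∀ f ∈ F, Convex 𝕜 f ∧ Convex 𝕜 fᶜ) {s : Finset E} (hs : Shatters F s) :
    #s ≤ finrank 𝕜 E + 1 := by
  by_contra! hcard
  have hdep : ¬ AffineIndependent 𝕜 ((↑) : s → E) := fun hind => by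
    have := hind.card_le_finrank_succ.trans (Nat.add_le_add_right (Submodule.finrank_le _) 1)
    simp only [Fintype.card_coe] at this
    omega
  obtain ⟨I, x, hxI, hxIc⟩ := Convex.radon_partition hdep
  obtain ⟨f, hf, hfs⟩ := hs ((↑) '' I) (by rintro _ ⟨y, -, rfl⟩; exact y.2)
  have hI : ((↑) '' I : Set E) ⊆ f := hfs ▸ Set.inter_subset_left
  have hIc : ((↑) '' Iᶜ : Set E) ⊆ fᶜ := by
    rintro _ ⟨y, hy, rfl⟩ hyf
    obtain ⟨z, hz, hzy⟩ : (y : E) ∈ (↑) '' I := hfs ▸ ⟨hyf, y.2⟩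
    exact hy (Subtype.val_injective hzy ▸ hz)
  exact convexHull_min hIc (hF f hf).2 hxIc (convexHull_min hI (hF f hf).1 hxI)

end Radon

def halfSpaces (E : Type*) [AddCommGroup E] [Module ℝ E] : Set (Set E) :=
  {H | ∃ f : Dual ℝ E, ∃ c : ℝ, H = {x | f x ≤ c}}

theorem convex_and_convex_compl_of_mem_halfSpaces {E : Type*} [AddCommGroup E] [Module ℝ E]
    {H : Set E} (hH : H ∈ halfSpaces E) : Convex ℝ H ∧ Convex ℝ Hᶜ := by
  obtain ⟨f, c, rfl⟩ := hH
  refine ⟨convex_halfSpace_le f.isLinear c, ?_⟩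
  simpa only [Set.compl_ofPred, not_le] using convex_halfSpace_gt f.isLinear c

theorem Shatters.image {α β : Type*} {F : Set (Set β)} {Y : Set α} (g : α → β)
    (h : Shatters (Set.preimage g '' F) Y) : Shatters F (g '' Y) := by
  intro S hS
  obtain ⟨_, ⟨H, hH, rfl⟩, hHY⟩ := h (g ⁻¹' S ∩ Y) Set.inter_subset_right
  refine ⟨H, hH, ?_⟩
  rw [← Set.image_preimage_inter, hHY, Set.image_preimage_inter, Set.inter_eq_left.2 hS]

theorem sum_Iic_choose_le_add_one_pow (n d : ℕ) : ∑ k ∈ Iic d, n.choose k ≤ (n + 1) ^ d := calc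
  ∑ k ∈ Iic d, n.choose k ≤ ∑ k ∈ Iic d, n ^ k * 1 ^ (d - k) * d.choose k := by
    refine sum_le_sum fun k hk => ?_
    rw [one_pow, mul_one]
    exact (n.choose_le_pow k).trans (Nat.le_mul_of_pos_right _ (Nat.choose_pos (mem_Iic.1 hk)))
  _ = (n + 1) ^ d := by rw [add_pow, Nat.range_succ_eq_Iic]; simp only [Nat.cast_id]

section Traces

open scoped Classical

variable {α : Type*}

def traces (F : Set (Set α)) (Z : Finset α) : Finset (Finset α) :=
  {t ∈ Z.powerset | ∃ f ∈ F, {x ∈ Z | x ∈ f} = t}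

variable {F G : Set (Set α)} {Z : Finset α}

theorem mem_traces {t : Finset α} : t ∈ traces F Z ↔ ∃ f ∈ F, {x ∈ Z | x ∈ f} = t := by
  refine ⟨fun ht => (mem_filter.1 ht).2, fun ht => mem_filter.2 ⟨?_, ht⟩⟩
  obtain ⟨f, -, rfl⟩ := ht
  exact mem_powerset.2 (filter_subset _ _)

theorem card_traces_of_shatters (h : Shatters F Z) : #(traces F Z) = 2 ^ #Z := by
  rw [← card_powerset]
  refine congr_arg card (filter_true_of_mem fun t ht => ?_)
  obtain ⟨f, hf, hft⟩ := h t (by simpa using ht)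
  refine ⟨f, hf, coe_injective ?_⟩
  rw [coe_filter, ← hft]
  ext x
  simp [and_comm]

theorem card_traces_interFamily_le (l : ℕ) :
    #(traces (InterFamily F l) Z) ≤ #(traces F Z) ^ l := by
  calc #(traces (InterFamily F l) Z)
      ≤ #((Fintype.piFinset fun _ : Fin l => traces F Z).image
          fun t => {x ∈ Z | ∀ i, x ∈ t i}) := by
        refine card_le_card fun t ht => ?_
        obtain ⟨_, ⟨g, hg, rfl⟩, rfl⟩ := mem_traces.1 ht
        refine mem_image.2 ⟨fun i => {x ∈ Z | x ∈ g i},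
          Fintype.mem_piFinset.2 fun i => mem_traces.2 ⟨g i, hg i, rfl⟩, ?_⟩
        ext x
        simp +contextual
    _ ≤ #(traces F Z) ^ l := card_image_le.trans (by simp)

theorem card_traces_le_sq_of_forall_mem_iff_or {D : Set α} (hZ : ↑Z ⊆ D)
    (h : ∀ f ∈ F, ∃ g₁ ∈ G, ∃ g₂ ∈ G, ∀ x ∈ D, x ∈ f ↔ x ∈ g₁ ∨ x ∈ g₂) :
    #(traces F Z) ≤ #(traces G Z) ^ 2 := by
  calc #(traces F Z) ≤ #((traces G Z ×ˢ traces G Z).image fun t => t.1 ∪ t.2) := by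
        refine card_le_card fun t ht => ?_
        obtain ⟨f, hf, rfl⟩ := mem_traces.1 ht
        obtain ⟨g₁, hg₁, g₂, hg₂, hfg⟩ := h f hf
        refine mem_image.2 ⟨({x ∈ Z | x ∈ g₁}, {x ∈ Z | x ∈ g₂}),
          mem_product.2 ⟨mem_traces.2 ⟨g₁, hg₁, rfl⟩, mem_traces.2 ⟨g₂, hg₂, rfl⟩⟩, ?_⟩
        ext x
        simp only [mem_union, mem_filter]
        exact ⟨by rintro (⟨hx, _⟩ | ⟨hx, _⟩) <;> simp_all [hZ hx],
          fun ⟨hx, hxf⟩ => by simpa [hx] using (hfg x (hZ hx)).1 hxf⟩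
    _ ≤ #(traces G Z) ^ 2 := card_image_le.trans (by rw [card_product, sq])

theorem subset_of_shatters_traces {s : Finset α} (h : (traces G Z).Shatters s) : s ⊆ Z := by
  obtain ⟨t, ht, hst⟩ := h.exists_superset
  exact hst.trans (mem_powerset.1 (mem_filter.1 ht).1)

theorem shatters_of_shatters_traces {s : Finset α} (h : (traces G Z).Shatters s) :
    Shatters G s := by
  intro S hS
  obtain ⟨u, hu, hsu⟩ := h (filter_subset (· ∈ S) s)
  obtain ⟨g, hg, rfl⟩ := mem_traces.1 hu
  refine ⟨g, hg, ?_⟩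
  have hsZ := subset_of_shatters_traces h
  ext x
  have := congr_arg (x ∈ ·) hsu
  simp only [mem_inter, mem_filter, eq_iff_iff] at this
  constructor
  · rintro ⟨hxg, hxs⟩
    exact (this.1 ⟨hxs, hsZ hxs, hxg⟩).2
  · intro hxS
    exact ⟨(this.2 ⟨hS hxS, hxS⟩).2.2, hS hxS⟩

theorem card_traces_le_add_one_pow {d : ℕ} (hG : ∀ s ⊆ Z, Shatters G s → #s ≤ d) :
    #(traces G Z) ≤ (#Z + 1) ^ d := calc
  #(traces G Z) ≤ #(traces G Z).shatterer := card_le_card_shatterer _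
  _ ≤ #((Iic d).biUnion fun k => Z.powersetCard k) := by
    refine card_le_card fun s hs => ?_
    have hs := mem_shatterer.1 hs
    have hsZ := subset_of_shatters_traces hs
    exact mem_biUnion.2 ⟨#s, mem_Iic.2 (hG s hsZ (shatters_of_shatters_traces hs)),
      mem_powersetCard.2 ⟨hsZ, rfl⟩⟩
  _ ≤ ∑ k ∈ Iic d, (#Z).choose k := card_biUnion_le.trans (by simp)
  _ ≤ (#Z + 1) ^ d := sum_Iic_choose_le_add_one_pow _ _

end Traces

section Disks

open RealInnerProductSpace

variable {V : Type*} [NormedAddCommGroup V]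

def diskLift (d : V × ℝ) : ℝ × V × ℝ := (‖d.1‖ ^ 2 - d.2 ^ 2, d.1, d.2)

theorem diskLift_injective : Function.Injective (diskLift (V := V)) := by
  rintro ⟨p, r⟩ ⟨p', r'⟩ h
  simp only [diskLift, Prod.mk.injEq] at h
  exact Prod.ext h.2.1 h.2.2

variable [InnerProductSpace ℝ V]

def liftForm (a : ℝ) (v : V) (b : ℝ) : Dual ℝ (ℝ × V × ℝ) :=
  (a • LinearMap.id).coprod ((innerₛₗ ℝ v).coprod (b • LinearMap.id))

theorem liftForm_diskLift (a : ℝ) (v : V) (b : ℝ) (d : V × ℝ) :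
    liftForm a v b (diskLift d) = a * (‖d.1‖ ^ 2 - d.2 ^ 2) + ⟪v, d.1⟫ + b * d.2 := by
  simp [liftForm, diskLift, add_assoc]

theorem dist_sq_eq_norm_sq_sub_inner_add (p q : V) :
    dist p q ^ 2 = ‖p‖ ^ 2 - 2 * ⟪q, p⟫ + ‖q‖ ^ 2 := by
  rw [dist_eq_norm, norm_sub_sq_real, real_inner_comm]

end Disks

section PlaneDisks

open RealInnerProductSpace

variable {q : EuclideanSpace ℝ (Fin 2)} {s : ℝ} {d : EuclideanSpace ℝ (Fin 2) × ℝ}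

theorem mem_Dle_iff (hs : 0 ≤ s) (hd : d ∈ Ddisks) :
    d ∈ Dle q s ↔ liftForm 1 ((-2 : ℝ) • q) (-2 * s) (diskLift d) ≤ s ^ 2 - ‖q‖ ^ 2 := by
  have hr : 0 ≤ d.2 := hd
  rw [liftForm_diskLift, real_inner_smul_left]
  simp only [Dle, Set.mem_ofPred_eq, hd, true_and, sub_le_iff_le_add']
  rw [← pow_le_pow_iff_left₀ dist_nonneg (by positivity) two_ne_zero,
    dist_sq_eq_norm_sq_sub_inner_add]
  constructor <;> intro h <;> nlinarith

/-- Squaring `s - r ≤ dist p q` is only valid for `r < s`; the case `r ≥ s` is the first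
halfspace. -/
theorem mem_Dge_iff (hd : d ∈ Ddisks) :
    d ∈ Dge q s ↔ liftForm 0 0 (-1) (diskLift d) ≤ -s ∨
      liftForm (-1) ((2 : ℝ) • q) (-2 * s) (diskLift d) ≤ ‖q‖ ^ 2 - s ^ 2 := by
  have hr : 0 ≤ d.2 := hd
  have hsplit : s ≤ dist d.1 q + d.2 ↔ s ≤ d.2 ∨ (s - d.2) ^ 2 ≤ dist d.1 q ^ 2 := by
    rcases le_or_gt s d.2 with h | h
    · simp only [h, true_or, iff_true]
      linarith [dist_nonneg (x := d.1) (y := q)]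
    · rw [pow_le_pow_iff_left₀ (by linarith) dist_nonneg two_ne_zero]
      simp [h.not_ge]
  rw [liftForm_diskLift, liftForm_diskLift, real_inner_smul_left, inner_zero_left]
  simp only [Dge, Set.mem_ofPred_eq, hd, true_and, hsplit, dist_sq_eq_norm_sq_sub_inner_add]
  constructor <;> rintro (h | h) <;> [left; right; left; right] <;> nlinarith

def diskHalfSpaces : Set (Set (EuclideanSpace ℝ (Fin 2) × ℝ)) :=
  Set.preimage diskLift '' halfSpaces (ℝ × EuclideanSpace ℝ (Fin 2) × ℝ)

theorem preimage_diskLift_mem_diskHalfSpaces (f : Dual ℝ (ℝ × EuclideanSpace ℝ (Fin 2) × ℝ))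
    (c : ℝ) : diskLift ⁻¹' {x | f x ≤ c} ∈ diskHalfSpaces :=
  ⟨_, ⟨f, c, rfl⟩, rfl⟩

theorem exists_diskHalfSpaces_of_mem_Hle_union_Hge {f : Set (EuclideanSpace ℝ (Fin 2) × ℝ)}
    (hf : f ∈ Hle ∪ Hge) : ∃ g₁ ∈ diskHalfSpaces, ∃ g₂ ∈ diskHalfSpaces,
      ∀ d ∈ Ddisks, d ∈ f ↔ d ∈ g₁ ∨ d ∈ g₂ := by
  rcases hf with ⟨q, s, hs, rfl⟩ | ⟨q, s, -, rfl⟩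
  · exact ⟨_, preimage_diskLift_mem_diskHalfSpaces _ _, _,
      preimage_diskLift_mem_diskHalfSpaces _ _,
      fun d hd => (mem_Dle_iff hs.le hd).trans or_self_iff.symm⟩
  · exact ⟨_, preimage_diskLift_mem_diskHalfSpaces _ _, _,
      preimage_diskLift_mem_diskHalfSpaces _ _, fun d hd => mem_Dge_iff hd⟩

theorem card_le_five_of_shatters_diskHalfSpaces {s : Finset (EuclideanSpace ℝ (Fin 2) × ℝ)}
    (h : Shatters diskHalfSpaces s) : #s ≤ 5 := by
  rw [← card_image_of_injective s diskLift_injective]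
  refine (card_le_finrank_add_one_of_shatters
    (fun _ hH => convex_and_convex_compl_of_mem_halfSpaces hH) ?_).trans_eq ?_
  · rw [coe_image]
    exact h.image diskLift
  · simp [finrank_prod]

end PlaneDisks

section Growth

open Real

theorem le_four_mul_mul_log_of_le_mul_log {a x : ℝ} (ha : 0 ≤ a) (hx : 0 ≤ x)
    (h : x ≤ a * log (x + 1)) : x ≤ 4 * a * log (a + 1) := by
  set t := √(x + 1)
  have ht1 : 1 ≤ t := one_le_sqrt.2 (by linarith)
  have htt : t ^ 2 = x + 1 := sq_sqrt (by linarith)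
  have hlog : log (x + 1) ≤ 2 * (t - 1) := by
    rw [← htt, log_pow]
    push_cast
    linarith [log_le_sub_one_of_pos (by linarith : 0 < t)]
  have ht : t ≤ 2 * a + 1 := by nlinarith
  have hx1 : x + 1 ≤ (a + 1) ^ 4 := calc
    x + 1 = t ^ 2 := htt.symm
    _ ≤ (2 * a + 1) ^ 2 := by gcongr
    _ ≤ ((a + 1) ^ 2) ^ 2 := by gcongr; nlinarith
    _ = (a + 1) ^ 4 := by ring
  calc x ≤ a * log (x + 1) := h
    _ ≤ a * log ((a + 1) ^ 4) := by gcongr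
    _ = 4 * a * log (a + 1) := by rw [log_pow]; push_cast; ring

theorem le_mul_log_of_two_pow_le {m k : ℕ} (h : 2 ^ m ≤ (m + 1) ^ k) :
    (m : ℝ) ≤ 8 * k * log (2 * k + 1) := by
  have hlog : m * log 2 ≤ k * log (m + 1) := by
    rw [← log_pow, ← log_pow]
    exact log_le_log (by positivity) (by exact_mod_cast h)
  have hm : (m : ℝ) ≤ 2 * k * log (m + 1) := by
    nlinarith [log_two_gt_d9, log_nonneg (by linarith : (1 : ℝ) ≤ m + 1)]
  linarith [le_four_mul_mul_log_of_le_mul_log (by positivity) m.cast_nonneg hm]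

theorem le_mul_log_of_two_pow_le_pow_ten_mul {m l : ℕ} (hl : 1 ≤ l)
    (h : 2 ^ m ≤ (m + 1) ^ (10 * l)) : (m : ℝ) ≤ 400 * l * log (l + 1) := by
  have hl2 : (2 : ℝ) ≤ l + 1 := by norm_cast; omega
  have hlog : log (20 * l + 1) ≤ 5 * log (l + 1) := calc
    log (20 * l + 1) ≤ log ((l + 1) ^ 5) := by
      refine log_le_log (by positivity) ?_
      calc 20 * (l : ℝ) + 1 ≤ 2 ^ 3 * (l + 1) ^ 2 := by nlinarith
        _ ≤ (l + 1) ^ 3 * (l + 1) ^ 2 := by gcongr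
        _ = (l + 1) ^ 5 := by ring
    _ = 5 * log (l + 1) := by rw [log_pow]; norm_num
  calc (m : ℝ) ≤ 8 * (10 * l : ℕ) * log (2 * (10 * l : ℕ) + 1) := le_mul_log_of_two_pow_le h
    _ = 80 * l * log (20 * l + 1) := by push_cast; ring_nf
    _ ≤ 80 * l * (5 * log (l + 1)) := by gcongr
    _ = 400 * l * log (l + 1) := by ring

end Growth

/-- There is a constant `C > 0` such that for every `l ≥ 1`, every
finite set of closed disks shattered by
`H_l = {f₁ ∩ ⋯ ∩ f_l : f₁, …, f_l ∈ H_≤ ∪ H_≥}` has cardinality at most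
`C · l · log (l + 1)`; i.e. `(𝒟, H_l)` has VC dimension `O(l log l)`. -/
theorem vc_dim_inter_family :
    ∃ C : ℝ, 0 < C ∧ ∀ l : ℕ, 1 ≤ l →
      ∀ Y ⊆ Ddisks, Y.Finite → Shatters (InterFamily (Hle ∪ Hge) l) Y →
        (Y.ncard : ℝ) ≤ C * l * Real.log (l + 1) := by
  refine ⟨400, by norm_num, fun l hl Y hYD hY hshat => ?_⟩
  rw [Set.ncard_eq_toFinset_card Y hY]
  set Z := hY.toFinset
  rw [← hY.coe_toFinset] at hYD hshat
  refine le_mul_log_of_two_pow_le_pow_ten_mul hl ?_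
  calc 2 ^ #Z = #(traces (InterFamily (Hle ∪ Hge) l) Z) := (card_traces_of_shatters hshat).symm
    _ ≤ #(traces (Hle ∪ Hge) Z) ^ l := card_traces_interFamily_le l
    _ ≤ (#(traces diskHalfSpaces Z) ^ 2) ^ l := by
      gcongr
      exact card_traces_le_sq_of_forall_mem_iff_or hYD
        fun _ hf => exists_diskHalfSpaces_of_mem_Hle_union_Hge hf
    _ ≤ (((#Z + 1) ^ 5) ^ 2) ^ l := by
      gcongr
      exact card_traces_le_add_one_pow fun _ _ hs => card_le_five_of_shatters_diskHalfSpaces hs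
    _ = (#Z + 1) ^ (10 * l) := by rw [← pow_mul, ← pow_mul]; ring_nf
end
end

section
/- Let c₁ > 0, set c₅ = 5·(c₁ + 1/100) and c₄ = √12 · c₅. Let k, a > 0 be reals with c₄ · c₁ · √(k/a) ≤ 1/100. Let b : ℝ → ℝ be a function such that (i) b(n) = 0 for every n with a/12 ≤ n ≤ a, and (ii) for every n > a there exists a real β with 1/12 ≤ β ≤ 11/12 such that b(n) ≤ b(β·n) + b((1−β)·n + c₁·√(k·n)) + c₁·√(k·n). Then for every n ≥ a/12, b(n) ≤ c₄ · n · √k / √a − c₅ · √(k·n); in particular b(n) ≤ c₄ · n · √(k/a). -/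
/-!
Write `F(n) = c₄·n·√k/√a − c₅·√(k·n)` for the claimed bound. It is nonnegative on the base
range `[a/12, a]` because `c₄ ≥ √12·c₅`, and a split of `n` costs at most the slack it creates:
the linear parts of `F` add up to `c₄·√(k/a)·(n + c₁√(kn))`, overshooting `c₄·√(k/a)·n` by at most
`√(kn)/100`, while the square-root parts gain `(√β + √(1−β) − 1)·c₅√(kn) ≥ c₅√(kn)/5 =
(c₁ + 1/100)·√(kn)`, which pays for that overshoot and for the cost `c₁√(kn)` of the split.
Since `c₁√(kn) ≤ n/17` for `n > a`, both subproblems are at most `n − a/50`, so induction on `n`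
in steps of `a/50` closes the argument.
-/

open Real

theorem Real.forall_ge_induction_of_le_sub {P : ℝ → Prop} {L δ : ℝ} (hδ : 0 < δ)
    (step : ∀ n, L ≤ n → (∀ m, L ≤ m → m ≤ n - δ → P m) → P n) :
    ∀ n, L ≤ n → P n := by
  have bounded : ∀ N : ℕ, ∀ n, L ≤ n → n < L + N * δ → P n := by
    intro N
    induction N with
    | zero => intro n hn hnN; simp only [Nat.cast_zero, zero_mul, add_zero] at hnN; linarith
    | succ N ih =>
      refine fun n hn hnN => step n hn fun m hm hmn => ih m hm ?_
      push_cast at hnN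
      linarith
  intro n hn
  obtain ⟨N, hN⟩ := exists_nat_gt ((n - L) / δ)
  rw [div_lt_iff₀ hδ] at hN
  exact bounded N n hn (by linarith)

theorem sqrt_add_sqrt_one_sub_ge {β : ℝ} (hβ₁ : 1 / 12 ≤ β) (hβ₂ : β ≤ 11 / 12) :
    6 / 5 ≤ √β + √(1 - β) := by
  have hu := sq_sqrt (show 0 ≤ β by linarith)
  have hv := sq_sqrt (show 0 ≤ 1 - β by linarith)
  have huv : 11 / 50 ≤ √β * √(1 - β) := by
    nlinarith [sqrt_nonneg β, sqrt_nonneg (1 - β), mul_nonneg (sqrt_nonneg β) (sqrt_nonneg (1 - β))]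
  nlinarith [sqrt_nonneg β, sqrt_nonneg (1 - β)]

noncomputable def intersectionBound (c₄ c₅ k a n : ℝ) : ℝ :=
  c₄ * n * √k / √a - c₅ * √(k * n)

theorem intersectionBound_nonneg {c₄ c₅ k a n : ℝ} (hc₅ : 0 ≤ c₅) (hc₄ : √12 * c₅ ≤ c₄)
    (hk : 0 ≤ k) (ha : 0 < a) (hn : a / 12 ≤ n) : 0 ≤ intersectionBound c₄ c₅ k a n := by
  have hn₀ : 0 ≤ n := by linarith
  have hna : √n * √a ≤ √12 * n := by
    rw [← sqrt_mul hn₀, sqrt_le_left (by positivity), mul_pow, sq_sqrt (by norm_num)]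
    nlinarith
  rw [intersectionBound, sub_nonneg, le_div_iff₀ (sqrt_pos.mpr ha), sqrt_mul hk]
  calc c₅ * (√k * √n) * √a = c₅ * √k * (√n * √a) := by ring
    _ ≤ c₅ * √k * (√12 * n) := by gcongr
    _ = √12 * c₅ * n * √k := by ring
    _ ≤ c₄ * n * √k := by gcongr

theorem intersectionBound_split_add_le {c₁ c₄ c₅ k a n β : ℝ} (hc₁ : 0 ≤ c₁)
    (hc₅ : 5 * (c₁ + 1 / 100) ≤ c₅) (hsmall : c₄ * c₁ * (√k / √a) ≤ 1 / 100)
    (hk : 0 ≤ k) (hβ₁ : 1 / 12 ≤ β) (hβ₂ : β ≤ 11 / 12) :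
    intersectionBound c₄ c₅ k a (β * n) +
        intersectionBound c₄ c₅ k a ((1 - β) * n + c₁ * √(k * n)) + c₁ * √(k * n) ≤
      intersectionBound c₄ c₅ k a n := by
  set R := √(k * n)
  have hR : 0 ≤ R := sqrt_nonneg _
  have hleft : √(k * (β * n)) = √β * R := by
    rw [mul_left_comm, sqrt_mul (by linarith)]
  have hright : √(1 - β) * R ≤ √(k * ((1 - β) * n + c₁ * R)) := by
    rw [← sqrt_mul (by linarith)]
    exact sqrt_le_sqrt (by nlinarith [mul_nonneg hc₁ hR])
  have hroots : 6 / 5 * R ≤ √(k * (β * n)) + √(k * ((1 - β) * n + c₁ * R)) :=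
    calc 6 / 5 * R ≤ (√β + √(1 - β)) * R :=
          mul_le_mul_of_nonneg_right (sqrt_add_sqrt_one_sub_ge hβ₁ hβ₂) hR
      _ ≤ _ := by rw [add_mul, hleft]; gcongr
  have hlinear : c₄ * (c₁ * R) * √k / √a ≤ R / 100 := by
    have := mul_le_mul_of_nonneg_right hsmall hR
    rw [mul_div_assoc]
    linarith
  have hc₅R : c₅ * (6 / 5 * R) ≤ c₅ * (√(k * (β * n)) + √(k * ((1 - β) * n + c₁ * R))) :=
    mul_le_mul_of_nonneg_left hroots (by linarith)
  have hgain : (c₁ + 1 / 100) * R ≤ c₅ / 5 * R := mul_le_mul_of_nonneg_right (by linarith) hR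
  have hsum : c₄ * (β * n) * √k / √a + c₄ * ((1 - β) * n + c₁ * R) * √k / √a =
      c₄ * n * √k / √a + c₄ * (c₁ * R) * √k / √a := by ring
  simp only [intersectionBound]
  linarith

theorem sqrt_mul_le_sqrt_div_mul {k a n : ℝ} (hk : 0 ≤ k) (ha : 0 < a) (han : a ≤ n) :
    √(k * n) ≤ √(k / a) * n := by
  have hn : 0 ≤ n := by linarith
  have hkn : k * n = k / a * (a * n) := by field_simp
  have han' : √(a * n) ≤ n := by
    rw [sqrt_le_left hn]
    nlinarith
  rw [hkn, sqrt_mul (div_nonneg hk ha.le)]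
  gcongr

/-- The bound on the recurrence `b(n)` counting the total number of
intersected (boundary) balls: with `c₅ = 5·(c₁ + 1/100)`, `c₄ = √12 · c₅` and
`c₄·c₁·√(k/a) ≤ 1/100`, if `b(n) = 0` for `a/12 ≤ n ≤ a` and for every `n > a` there
is `β ∈ [1/12, 11/12]` with
`b(n) ≤ b(β·n) + b((1−β)·n + c₁·√(k·n)) + c₁·√(k·n)`, then for all `n ≥ a/12`,
`b(n) ≤ c₄·n·√k/√a − c₅·√(k·n)`; in particular `b(n) ≤ c₄·n·√(k/a)`. -/
theorem boundary_recurrence_bound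
    (c₁ c₄ c₅ k a : ℝ) (b : ℝ → ℝ) (hc₁ : 0 < c₁)
    (hc₅ : c₅ = 5 * (c₁ + 1 / 100)) (hc₄ : c₄ = Real.sqrt 12 * c₅)
    (hk : 0 < k) (ha : 0 < a)
    (hsmall : c₄ * c₁ * Real.sqrt (k / a) ≤ 1 / 100)
    (hbase : ∀ n : ℝ, a / 12 ≤ n → n ≤ a → b n = 0)
    (hrec : ∀ n : ℝ, a < n → ∃ β : ℝ, 1 / 12 ≤ β ∧ β ≤ 11 / 12 ∧
      b n ≤ b (β * n) + b ((1 - β) * n + c₁ * Real.sqrt (k * n)) + c₁ * Real.sqrt (k * n)) :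
    ∀ n : ℝ, a / 12 ≤ n →
      b n ≤ c₄ * n * Real.sqrt k / Real.sqrt a - c₅ * Real.sqrt (k * n) ∧
      b n ≤ c₄ * n * Real.sqrt (k / a) := by
  have hratio : c₁ * √(k / a) ≤ 1 / 17 := by
    have h12 : 17 / 5 ≤ √12 := le_sqrt_of_sq_le (by norm_num)
    have hc₄' : 17 / 100 ≤ c₄ := by rw [hc₄, hc₅]; nlinarith
    nlinarith [mul_le_mul_of_nonneg_right hc₄' (mul_nonneg hc₁.le (sqrt_nonneg (k / a)))]
  have hsmall' : c₄ * c₁ * (√k / √a) ≤ 1 / 100 := by rwa [← sqrt_div hk.le]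
  have hmain : ∀ n, a / 12 ≤ n → b n ≤ intersectionBound c₄ c₅ k a n := by
    refine Real.forall_ge_induction_of_le_sub (δ := a / 50) (by positivity) fun n hn ih => ?_
    rcases le_or_gt n a with hna | hna
    · rw [hbase n hn hna]
      exact intersectionBound_nonneg (by linarith) hc₄.ge hk.le ha hn
    obtain ⟨β, hβ₁, hβ₂, hb⟩ := hrec n hna
    have hX : c₁ * √(k * n) ≤ 1 / 17 * n :=
      calc c₁ * √(k * n) ≤ c₁ * (√(k / a) * n) := by
            gcongr; exact sqrt_mul_le_sqrt_div_mul hk.le ha hna.le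
        _ ≤ 1 / 17 * n := by
            rw [← mul_assoc]; exact mul_le_mul_of_nonneg_right hratio (by linarith)
    have hX₀ : 0 ≤ c₁ * √(k * n) := by positivity
    have h₁ := ih (β * n) (by nlinarith) (by nlinarith)
    have h₂ := ih ((1 - β) * n + c₁ * √(k * n)) (by nlinarith) (by nlinarith)
    have := intersectionBound_split_add_le (n := n) hc₁.le hc₅.ge hsmall' hk.le hβ₁ hβ₂
    linarith
  intro n hn
  have hbound := hmain n hn
  rw [intersectionBound] at hbound
  refine ⟨hbound, ?_⟩
  have hcorrection : 0 ≤ c₅ * √(k * n) := mul_nonneg (by linarith) (sqrt_nonneg _)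
  rw [sqrt_div hk.le, ← mul_div_assoc]
  linarith
end
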